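/- arXiv:2503.20598 — 3 statements merged into one kernel-verified Lean document; each statement's English description precedes it below -/
import Mathlib

section
/- If a real symmetric positive definite 3×3 matrix C with det C = 1 has at least two equal eigenvalues, then its invariants I₁ = tr C, I₂ = tr(cof C) satisfy the equation I₁³ + I₂³ - I₁²I₂²/4 - 9I₁I₂/2 + 27/4 = 0. -/
/-!
Diagonalising `C`, its invariants are the elementary symmetric functions `I₁ = κ₁ + κ₂ + κ₃`,
`I₂ = κ₁κ₂ + κ₁κ₃ + κ₂κ₃` of its eigenvalues, with `κ₁κ₂κ₃ = det C = 1`. Under this constraint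
the left-hand side is `-Δ/4`, where `Δ = ((κ₂ - κ₁)(κ₃ - κ₁)(κ₃ - κ₂))²` is the discriminant of
the characteristic polynomial `κ³ - I₁κ² + I₂κ - 1`, i.e. the squared Vandermonde determinant of
the eigenvalues; it vanishes exactly when two eigenvalues coincide.
-/

open Matrix Finset

theorem Matrix.trace_adjugate_mul_mul_of_mul_eq_one {n R : Type*} [Fintype n] [DecidableEq n]
    [CommRing R] {P Q : Matrix n n R} (hQP : Q * P = 1) (A : Matrix n n R) :
    (P * A * Q).adjugate.trace = A.adjugate.trace := by
  rw [adjugate_mul_distrib, adjugate_mul_distrib, ← Matrix.mul_assoc, trace_mul_cycle,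
    ← adjugate_mul_distrib, hQP, adjugate_one, Matrix.one_mul]

theorem Matrix.IsHermitian.trace_adjugate_eq_sum_prod_eigenvalues {n 𝕜 : Type*} [Fintype n]
    [DecidableEq n] [RCLike 𝕜] {A : Matrix n n 𝕜} (hA : A.IsHermitian) :
    A.adjugate.trace = ∑ i, ∏ j ∈ univ.erase i, (hA.eigenvalues j : 𝕜) := by
  conv_lhs => rw [hA.spectral_theorem, Unitary.conjStarAlgAut_apply]
  rw [trace_adjugate_mul_mul_of_mul_eq_one (Unitary.coe_star_mul_self _), adjugate_diagonal,
    trace_diagonal]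
  rfl

theorem Fin.sum_prod_univ_erase_three {R : Type*} [CommSemiring R] (v : Fin 3 → R) :
    ∑ i, ∏ j ∈ univ.erase i, v j = v 0 * v 1 + v 0 * v 2 + v 1 * v 2 := by
  rw [Fin.sum_univ_three, show univ.erase (0 : Fin 3) = {1, 2} by decide,
    show univ.erase (1 : Fin 3) = {0, 2} by decide, show univ.erase (2 : Fin 3) = {0, 1} by decide]
  simp only [mem_singleton, Fin.reduceEq, not_false_eq_true, prod_insert, prod_singleton]
  ring

theorem Matrix.det_vandermonde_fin_three {R : Type*} [CommRing R] (v : Fin 3 → R) :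
    (vandermonde v).det = (v 1 - v 0) * (v 2 - v 0) * (v 2 - v 1) := by
  rw [det_vandermonde, Fin.prod_univ_three, show Ioi (0 : Fin 3) = {1, 2} by decide,
    show Ioi (1 : Fin 3) = {2} by decide, show Ioi (2 : Fin 3) = ∅ by decide]
  simp

theorem invariants_identity_eq_neg_sq_det_vandermonde {K : Type*} [Field K] [CharZero K]
    (v : Fin 3 → K) (hv : v 0 * v 1 * v 2 = 1) :
    let I₁ := v 0 + v 1 + v 2
    let I₂ := v 0 * v 1 + v 0 * v 2 + v 1 * v 2
    I₁ ^ 3 + I₂ ^ 3 - I₁ ^ 2 * I₂ ^ 2 / 4 - 9 * I₁ * I₂ / 2 + 27 / 4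
      = -(vandermonde v).det ^ 2 / 4 := by
  intro I₁ I₂
  rw [det_vandermonde_fin_three]
  -- homogenising with `I₃ = v 0 * v 1 * v 2` (`I₁³` and `I₁ I₂` times `I₃`, `27/4` times `I₃²`)
  -- gives the classical discriminant identity; the difference is a multiple of `I₃ - 1`
  linear_combination (-(I₁ ^ 3 - 9 / 2 * I₁ * I₂ + 27 / 4 * (1 + v 0 * v 1 * v 2))) * hv

theorem repeated_eigenvalue_on_boundary_general (C : Matrix (Fin 3) (Fin 3) ℝ)
    (hpd : C.PosDef) (hdet : C.det = 1)
    (hrep : ∃ i j : Fin 3, i ≠ j ∧ hpd.1.eigenvalues i = hpd.1.eigenvalues j) :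
    C.trace ^ 3 + C.adjugate.trace ^ 3 - C.trace ^ 2 * C.adjugate.trace ^ 2 / 4
      - 9 * C.trace * C.adjugate.trace / 2 + 27 / 4 = 0 := by
  set e := hpd.1.eigenvalues
  have htrace : C.trace = e 0 + e 1 + e 2 := by
    simpa [Fin.sum_univ_three] using hpd.1.trace_eq_sum_eigenvalues
  have hadj : C.adjugate.trace = e 0 * e 1 + e 0 * e 2 + e 1 * e 2 := by
    simpa [Fin.sum_prod_univ_erase_three] using hpd.1.trace_adjugate_eq_sum_prod_eigenvalues
  have hprod : e 0 * e 1 * e 2 = 1 := by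
    simpa [hdet, Fin.prod_univ_three] using hpd.1.det_eq_prod_eigenvalues.symm
  obtain ⟨i, j, hij, heq⟩ := hrep
  rw [htrace, hadj, invariants_identity_eq_neg_sq_det_vandermonde e hprod,
    det_vandermonde_eq_zero_iff.mpr ⟨i, j, heq, hij⟩]
  norm_num

theorem repeated_eigenvalue_on_boundary (C : Matrix (Fin 3) (Fin 3) ℝ)
    (hsymm : C.IsSymm) (hpd : C.PosDef) (hdet : C.det = 1)
    (hrep : ∃ i j : Fin 3, i ≠ j ∧ hpd.1.eigenvalues i = hpd.1.eigenvalues j) :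
    C.trace ^ 3 + C.adjugate.trace ^ 3 - C.trace ^ 2 * C.adjugate.trace ^ 2 / 4
      - 9 * C.trace * C.adjugate.trace / 2 + 27 / 4 = 0 :=
  repeated_eigenvalue_on_boundary_general C hpd hdet hrep
end

section
/- For λ ≥ 1, set I₁(λ) = λ² + 2/λ (uniaxial tension) and I₂(λ) = λ^{-2} + 2λ. Then for any unimodular symmetric positive definite C with tr C = I₁(λ), one has tr(cof C) ≥ I₂(λ); i.e., uniaxial tension minimizes I₂ at fixed I₁. -/
set_option maxHeartbeats 1000000

open Matrix

lemma aux_scalar (l a b c : ℝ) (hl : 1 ≤ l) (ha : 0 < a) (hb : 0 < b) (hc : 0 < c)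
    (h0 : a * b * c = 1) (hs : a + b + c = l ^ 2 + 2 / l) :
    (l ^ 2)⁻¹ + 2 * l ≤ a * b + b * c + c * a := by
  have hl0 : (0:ℝ) < l := lt_of_lt_of_le one_pos hl
  have hs' : l * (a + b + c) = l ^ 3 + 2 := by
    rw [hs]; field_simp
  by_contra hcon
  push_neg at hcon
  set G : ℝ := (l * a - 1) * ((l * b - 1) * (l * c - 1)) with hGdef
  have hG : G = 2 * l ^ 3 + 1 - l ^ 2 * (a * b + b * c + c * a) := by
    rw [hGdef]; linear_combination l ^ 3 * h0 + hs'
  have hrhs : l ^ 2 * ((l ^ 2)⁻¹ + 2 * l) = 1 + 2 * l ^ 3 := by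
    field_simp
  have hGpos : 0 < G := by nlinarith [mul_lt_mul_of_pos_left hcon (by positivity : (0:ℝ) < l ^ 2)]
  have hida : a * G = (l * a - 1) ^ 2 * (a - l ^ 2) := by
    rw [hGdef]; linear_combination (l ^ 2 * (l * a - 1)) * h0 - (a * (l * a - 1)) * hs'
  have hidb : b * G = (l * b - 1) ^ 2 * (b - l ^ 2) := by
    rw [hGdef]; linear_combination (l ^ 2 * (l * b - 1)) * h0 - (b * (l * b - 1)) * hs'
  have hidc : c * G = (l * c - 1) ^ 2 * (c - l ^ 2) := by
    rw [hGdef]; linear_combination (l ^ 2 * (l * c - 1)) * h0 - (c * (l * c - 1)) * hs'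
  have hal : l ^ 2 < a := by
    by_contra h'; push_neg at h'
    nlinarith [mul_pos ha hGpos, mul_nonneg (sq_nonneg (l * a - 1)) (sub_nonneg.mpr h')]
  have hbl : l ^ 2 < b := by
    by_contra h'; push_neg at h'
    nlinarith [mul_pos hb hGpos, mul_nonneg (sq_nonneg (l * b - 1)) (sub_nonneg.mpr h')]
  have hcl : l ^ 2 < c := by
    by_contra h'; push_neg at h'
    nlinarith [mul_pos hc hGpos, mul_nonneg (sq_nonneg (l * c - 1)) (sub_nonneg.mpr h')]
  have h1 : 1 ≤ l ^ 2 := by nlinarith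
  have hbc : 1 < b * c := by nlinarith
  nlinarith

lemma det_sub_smul_one_eq (C : Matrix (Fin 3) (Fin 3) ℝ) (x : ℝ) :
    (C - x • 1).det = C.det - C.adjugate.trace * x + C.trace * x ^ 2 - x ^ 3 := by
  rw [Matrix.adjugate_fin_three, Matrix.trace_fin_three_of, Matrix.det_fin_three,
    Matrix.det_fin_three, Matrix.trace_fin_three]
  simp [Matrix.sub_apply, Matrix.smul_apply, Matrix.one_apply]
  ring

lemma det_sub_smul_one_eig (C : Matrix (Fin 3) (Fin 3) ℝ) (hpd : C.PosDef) (x : ℝ) :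
    (C - x • 1).det = (hpd.1.eigenvalues 0 - x) * ((hpd.1.eigenvalues 1 - x) *
      (hpd.1.eigenvalues 2 - x)) := by
  have hherm := hpd.1
  set U : Matrix (Fin 3) (Fin 3) ℝ := (hherm.eigenvectorUnitary : Matrix (Fin 3) (Fin 3) ℝ) with hU
  have hUU : U * star U = 1 := (Matrix.mem_unitaryGroup_iff).mp hherm.eigenvectorUnitary.2
  have hUU2 : star U * U = 1 := (Matrix.mem_unitaryGroup_iff').mp hherm.eigenvectorUnitary.2
  have h1 : C - x • 1 = U * (diagonal (fun i => hherm.eigenvalues i - x)) * star U := by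
    have hsp := hherm.spectral_theorem
    rw [Unitary.conjStarAlgAut_apply] at hsp
    have hd : (diagonal (fun i => hherm.eigenvalues i - x) : Matrix (Fin 3) (Fin 3) ℝ)
        = diagonal (RCLike.ofReal ∘ hherm.eigenvalues) - x • 1 := by
      rw [Matrix.smul_one_eq_diagonal, ← Matrix.diagonal_sub]
      rfl
    rw [hd, Matrix.mul_sub, Matrix.sub_mul, ← hsp]
    congr 1
    rw [Matrix.mul_smul, Matrix.smul_mul, Matrix.mul_one, hUU]
  rw [h1, Matrix.det_mul, Matrix.det_mul, mul_comm, ← mul_assoc, ← Matrix.det_mul, hUU2]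
  simp [Matrix.det_diagonal, Fin.prod_univ_three, mul_assoc]

theorem uniaxial_minimizes_I2 (l : ℝ) (hl : 1 ≤ l)
    (C : Matrix (Fin 3) (Fin 3) ℝ)
    (hsymm : C.IsSymm) (hpd : C.PosDef) (hdet : C.det = 1)
    (htr : C.trace = l ^ 2 + 2 / l) :
    (l ^ 2)⁻¹ + 2 * l ≤ C.adjugate.trace := by
  set a := hpd.1.eigenvalues 0
  set b := hpd.1.eigenvalues 1
  set c := hpd.1.eigenvalues 2
  have ha : 0 < a := hpd.eigenvalues_pos 0
  have hb : 0 < b := hpd.eigenvalues_pos 1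
  have hc : 0 < c := hpd.eigenvalues_pos 2
  have key : ∀ x : ℝ, (a - x) * ((b - x) * (c - x))
      = C.det - C.adjugate.trace * x + C.trace * x ^ 2 - x ^ 3 := fun x => by
    rw [← det_sub_smul_one_eig C hpd x, det_sub_smul_one_eq]
  have k0 := key 0
  have k1 := key 1
  have km := key (-1)
  rw [hdet, htr] at k0 k1 km
  set q := C.adjugate.trace with hq
  have h0 : a * b * c = 1 := by linear_combination k0
  have hs : a + b + c = l ^ 2 + 2 / l := by linear_combination k1 / 2 + km / 2 - h0
  have hqe : a * b + b * c + c * a = q := by linear_combination -k1 / 2 + km / 2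
  rw [← hqe]
  exact aux_scalar l a b c hl ha hb hc h0 hs
end

section
/- For λ ≥ 1, set I₁(λ) = 2λ² + λ^{-4} (equi-biaxial tension) and I₂(λ) = 2λ^{-2} + λ⁴. Then for any triple of positive reals (κ₁,κ₂,κ₃) with κ₁κ₂κ₃ = 1 and κ₁+κ₂+κ₃ = I₁(λ), one has 1/κ₁+1/κ₂+1/κ₃ ≤ I₂(λ); i.e., equi-biaxial tension maximizes I₂ at fixed I₁. -/
lemma kappa_lb (l x y z : ℝ) (hl : 1 ≤ l) (hx : 0 < x) (hy : 0 < y) (hz : 0 < z)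
    (hp : x * y * z = 1) (hs : x + y + z = 2*l^2 + (l^4)⁻¹) : (l^4)⁻¹ ≤ z := by
  have hl0 : (0:ℝ) < l := lt_of_lt_of_le one_pos hl
  set b := (l^4)⁻¹ with hbdef
  have hb : l^4 * b = 1 := mul_inv_cancel₀ (by positivity)
  have hl2 : 1 ≤ l^2 := one_le_pow₀ hl
  have hb1 : b ≤ 1 := by nlinarith [sq_nonneg (l^2-1), sq_nonneg l]
  by_contra h
  push_neg at h
  set s := 2*l^2 + b with hsdef
  have hxy : x + y = s - z := by linarith
  have hkey : z * (s - z)^2 ≥ 4 := by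
    have h1 : (x - y)^2 ≥ 0 := sq_nonneg _
    have h2 : (x+y)^2 ≥ 4 * (x*y) := by nlinarith
    calc z * (s-z)^2 = z * (x+y)^2 := by rw [hxy]
    _ ≥ z * (4 * (x*y)) := mul_le_mul_of_nonneg_left h2 hz.le
    _ = 4 * (x*y*z) := by ring
    _ = 4 := by rw [hp]; ring
  have hquadb : (0:ℝ) ≤ 4*l^2*(l^2 - b) := by nlinarith
  have hquad : 0 < z^2 + (b - 2*s)*z + 4*l^4 := by nlinarith [sq_nonneg (z - b)]
  have hfact : 4 - z*(s-z)^2 = (b - z) * (z^2 + (b - 2*s)*z + 4*l^4) := by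
    rw [hsdef]; linear_combination (-4) * hb
  nlinarith [mul_pos (sub_pos.2 h) hquad]

theorem biaxial_maximizes_I2 (l : ℝ) (hl : 1 ≤ l)
    (κ₁ κ₂ κ₃ : ℝ) (h₁ : 0 < κ₁) (h₂ : 0 < κ₂) (h₃ : 0 < κ₃)
    (hprod : κ₁ * κ₂ * κ₃ = 1)
    (hsum : κ₁ + κ₂ + κ₃ = 2 * l ^ 2 + (l ^ 4)⁻¹) :
    1 / κ₁ + 1 / κ₂ + 1 / κ₃ ≤ 2 * (l ^ 2)⁻¹ + l ^ 4 := by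
  have hl0 : (0:ℝ) < l := lt_of_lt_of_le one_pos hl
  set a := l^2 with hadef
  set b := (l^4)⁻¹ with hbdef
  have ha0 : 0 < a := by positivity
  have hb : a^2 * b = 1 := by rw [hadef, hbdef]; rw [← pow_mul]; exact mul_inv_cancel₀ (by positivity)
  have hl2 : 1 ≤ a := one_le_pow₀ hl
  -- lower bounds
  have lb3 : b ≤ κ₃ := kappa_lb l κ₁ κ₂ κ₃ hl h₁ h₂ h₃ hprod hsum
  have lb1 : b ≤ κ₁ := kappa_lb l κ₂ κ₃ κ₁ hl h₂ h₃ h₁ (by linarith [hprod]; ) (by linarith)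
  have lb2 : b ≤ κ₂ := kappa_lb l κ₁ κ₃ κ₂ hl h₁ h₃ h₂ (by linear_combination hprod) (by linarith)
  -- key: P ≤ 0
  have hP : (a - κ₁) * (a - κ₂) * (a - κ₃) ≤ 0 := by
    by_contra hP
    push_neg at hP
    rcases le_or_gt κ₁ a with c1 | c1 <;> rcases le_or_gt κ₂ a with c2 | c2 <;>
      rcases le_or_gt κ₃ a with c3 | c3
    · -- all ≤ a
      have t12 : 0 < (a - κ₁) * (a - κ₂) := by
        rcases lt_or_eq_of_le (mul_nonneg (by linarith) (by linarith) :
          0 ≤ (a - κ₁) * (a - κ₂)) with h | h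
        · exact h
        · exfalso; nlinarith
      have hq : a * (κ₃ - a) * (κ₃ - b) ≤ 0 := by
        have := mul_nonneg (mul_nonneg ha0.le (by linarith : 0 ≤ a - κ₃)) (by linarith : 0 ≤ κ₃ - b)
        nlinarith
      have hs' : a*κ₃*(κ₁+κ₂+κ₃) = a*κ₃*(2*a+b) := by rw [hsum]
      nlinarith [mul_pos h₃ t12, hq, hs']
    · -- κ₁,κ₂ ≤ a < κ₃ : P ≤ 0
      nlinarith [mul_nonneg (by linarith : 0 ≤ a - κ₁) (by linarith : 0 ≤ a - κ₂)]
    · -- κ₁,κ₃ ≤ a < κ₂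
      nlinarith [mul_nonneg (by linarith : 0 ≤ a - κ₁) (by linarith : 0 ≤ a - κ₃)]
    · -- κ₂,κ₃ > a : product > 1
      nlinarith [mul_pos (by linarith : (0:ℝ) < κ₂ - a) (by linarith : (0:ℝ) < κ₃ - a),
        mul_pos h₂ h₃]
    · -- κ₂,κ₃ ≤ a < κ₁
      nlinarith [mul_nonneg (by linarith : 0 ≤ a - κ₂) (by linarith : 0 ≤ a - κ₃)]
    · -- κ₁,κ₃ > a
      nlinarith [mul_pos (by linarith : (0:ℝ) < κ₁ - a) (by linarith : (0:ℝ) < κ₃ - a),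
        mul_pos h₁ h₃]
    · -- κ₁,κ₂ > a
      nlinarith [mul_pos (by linarith : (0:ℝ) < κ₁ - a) (by linarith : (0:ℝ) < κ₂ - a),
        mul_pos h₁ h₂]
    · -- all > a
      nlinarith [mul_pos (by linarith : (0:ℝ) < κ₁ - a) (by linarith : (0:ℝ) < κ₂ - a),
        mul_pos h₁ h₂]
  -- conclude
  have e1 : 1/κ₁ = κ₂ * κ₃ := by rw [div_eq_iff h₁.ne']; linear_combination -hprod
  have e2 : 1/κ₂ = κ₁ * κ₃ := by rw [div_eq_iff h₂.ne']; linear_combination -hprod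
  have e3 : 1/κ₃ = κ₁ * κ₂ := by rw [div_eq_iff h₃.ne']; linear_combination -hprod
  rw [e1, e2, e3]
  have hinv : a * (2 * (l^2)⁻¹ + l^4) = 2 + a^3 := by
    rw [hadef]; field_simp
  have key : a * (κ₂*κ₃ + κ₁*κ₃ + κ₁*κ₂) ≤ a * (2 * (l^2)⁻¹ + l^4) := by
    rw [hinv]; nlinarith
  exact le_of_mul_le_mul_left key ha0
end
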